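/- Let $\mathcal{F}$ be a class of densities, $T$ a real functional on $\mathcal{F}$, and $f\in\mathcal{F}$. Suppose $\{f_n\}\subseteq\mathcal{F}$ satisfies $\sqrt{n}\,h(f_n,f)\to\alpha$ and $|T(f_n)-T(f)|\to\beta$ with $0<\alpha,\beta<\infty$, where $h$ is the Hellinger distance. Then for the absolute-value loss, the local minimax risk satisfies $\liminf_{n\to\infty}\inf_{T_n}\sup_{g\in\mathcal{F}_f} \mathbb{E}_{g^{\otimes n}}|T_n - T(g)| \ge \tfrac{1}{4}\beta e^{-2\alpha^2}$, where $\mathcal{F}_f$ is any open Hellinger ball centered at $f$ containing the $f_n$ eventually, and the infimum is over all estimators $T_n$ based on $n$ i.i.d. observations. -/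

import Mathlib

open MeasureTheory Set Filter Topology
open scoped ENNReal

/-!
Le Cam's two-point method. For an estimator `S` of the functional at `f` and at `g`, the
triangle inequality `|T g - T f| ≤ |S - T f| + |S - T g|`, integrated against
`min(f^{⊗n}, g^{⊗n})`, bounds the sum of the two risks from below by `|T g - T f|` times the
overlap `∫ min(f^{⊗n}, g^{⊗n})`. By Cauchy–Schwarz the overlap is at least half the square of the
Hellinger affinity `∫ √(f^{⊗n} g^{⊗n}) = (1 - h²(g, f))ⁿ`, which is multiplicative under products.
Taking `g = fₙ`, `n h²(fₙ, f) → α²` gives `(1 - h²(fₙ, f))^{2n} → e^{-2α²}`.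
-/

/-- Squared Hellinger distance between two `μ`-densities:
`h²(p,q) = (1/2) ∫ (√p - √q)² dμ`. -/
noncomputable def hellingerSq {X : Type*} [MeasurableSpace X] (μ : Measure X)
    (p q : X → ℝ) : ℝ :=
  (1 / 2) * ∫ x, (Real.sqrt (p x) - Real.sqrt (q x)) ^ 2 ∂μ

namespace MeasureTheory

variable {n : ℕ} {α : Fin n → Type*} [∀ i, MeasurableSpace (α i)]

theorem lintegral_fin_prod_eq_prod (μ : ∀ i, Measure (α i)) [∀ i, SigmaFinite (μ i)]
    {f : ∀ i, α i → ℝ≥0∞} (hf : ∀ i, Measurable (f i)) :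
    ∫⁻ x, ∏ i, f i (x i) ∂Measure.pi μ = ∏ i, ∫⁻ x, f i x ∂μ i := by
  induction n with
  | zero => simp
  | succ n ih =>
    calc ∫⁻ x, ∏ i, f i (x i) ∂Measure.pi μ
        = ∫⁻ x : α 0 × ((j : Fin n) → α (Fin.succAbove 0 j)),
            f 0 x.1 * ∏ j, f (Fin.succAbove 0 j) (x.2 j)
            ∂(μ 0).prod (Measure.pi fun j ↦ μ (Fin.succAbove 0 j)) := by
          rw [← ((measurePreserving_piFinSuccAbove μ 0).symm).lintegral_comp_emb
            (MeasurableEquiv.measurableEmbedding _)]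
          refine lintegral_congr fun x ↦ ?_
          rw [Fin.prod_univ_succAbove _ 0]
          simp only [MeasurableEquiv.piFinSuccAbove_symm_apply, Fin.insertNthEquiv_apply,
            Fin.insertNth_apply_same, Fin.insertNth_apply_succAbove]
      _ = (∫⁻ x, f 0 x ∂μ 0) * ∏ j, ∫⁻ x, f (Fin.succAbove 0 j) x ∂μ (Fin.succAbove 0 j) := by
          rw [← ih _ fun j ↦ hf _]
          exact lintegral_prod_mul (hf 0).aemeasurable
            (Finset.measurable_prod _ fun j _ ↦ (hf _).comp (measurable_pi_apply j)).aemeasurable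
      _ = ∏ i, ∫⁻ x, f i x ∂μ i := (Fin.prod_univ_succAbove (fun i ↦ ∫⁻ x, f i x ∂μ i) 0).symm

theorem Measure.pi_withDensity (μ : ∀ i, Measure (α i)) [∀ i, SigmaFinite (μ i)]
    {f : ∀ i, α i → ℝ≥0∞} (hf : ∀ i, Measurable (f i))
    [∀ i, SigmaFinite ((μ i).withDensity (f i))] :
    Measure.pi (fun i ↦ (μ i).withDensity (f i))
      = (Measure.pi μ).withDensity fun x ↦ ∏ i, f i (x i) := by
  refine Measure.pi_eq fun s hs ↦ ?_
  rw [withDensity_apply _ (MeasurableSet.univ_pi hs), Measure.restrict_pi_pi,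
    lintegral_fin_prod_eq_prod _ hf]
  simp_rw [withDensity_apply _ (hs _)]

end MeasureTheory

section TwoPoint

variable {Y : Type*} [MeasurableSpace Y] {π : Measure Y} {p q : Y → ℝ≥0∞}

noncomputable def hellingerAffinity (π : Measure Y) (p q : Y → ℝ≥0∞) : ℝ≥0∞ :=
  ∫⁻ y, (p y * q y) ^ (1 / 2 : ℝ) ∂π

theorem hellingerAffinity_pi {n : ℕ} (μ : Measure Y) [SigmaFinite μ] (hp : Measurable p)
    (hq : Measurable q) :
    hellingerAffinity (Measure.pi fun _ : Fin n ↦ μ) (fun w ↦ ∏ i, p (w i)) (fun w ↦ ∏ i, q (w i))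
      = hellingerAffinity μ p q ^ n := by
  have h12 : (0 : ℝ) ≤ 1 / 2 := by norm_num
  simp only [hellingerAffinity, ← Finset.prod_mul_distrib, ← ENNReal.prod_rpow_of_nonneg h12]
  rw [lintegral_fin_prod_eq_prod (f := fun _ y ↦ (p y * q y) ^ (1 / 2 : ℝ)) _
    fun _ ↦ (hp.mul hq).pow_const _, Finset.prod_const,
    Finset.card_univ, Fintype.card_fin]

theorem sq_hellingerAffinity_le_two_mul_lintegral_min (hp : Measurable p) (hq : Measurable q)
    (hp1 : ∫⁻ y, p y ∂π ≤ 1) (hq1 : ∫⁻ y, q y ∂π ≤ 1) :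
    hellingerAffinity π p q ^ 2 ≤ 2 * ∫⁻ y, min (p y) (q y) ∂π := by
  have hsq : ∀ x : ℝ≥0∞, (x ^ (1 / 2 : ℝ)) ^ 2 = x := fun x ↦ by
    rw [← ENNReal.rpow_natCast, ← ENNReal.rpow_mul]; norm_num
  have hmax : ∫⁻ y, max (p y) (q y) ∂π ≤ 2 :=
    calc ∫⁻ y, max (p y) (q y) ∂π ≤ ∫⁻ y, p y + q y ∂π :=
          lintegral_mono fun y ↦ max_le le_self_add le_add_self
      _ = (∫⁻ y, p y ∂π) + ∫⁻ y, q y ∂π := lintegral_add_left hp _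
      _ ≤ 2 := by rw [← one_add_one_eq_two]; exact add_le_add hp1 hq1
  -- Cauchy–Schwarz applied to `√(p q) = √(min p q) · √(max p q)`
  have hCS := ENNReal.lintegral_mul_le_Lp_mul_Lq π Real.HolderConjugate.two_two
    ((hp.min hq).pow_const (1 / 2 : ℝ)).aemeasurable
    ((hp.max hq).pow_const (1 / 2 : ℝ)).aemeasurable
  simp only [Pi.mul_apply, ENNReal.rpow_two, hsq] at hCS
  calc hellingerAffinity π p q ^ 2
      = (∫⁻ y, min (p y) (q y) ^ (1 / 2 : ℝ) * max (p y) (q y) ^ (1 / 2 : ℝ) ∂π) ^ 2 := by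
        simp_rw [hellingerAffinity,
          ← ENNReal.mul_rpow_of_nonneg _ _ (by norm_num : (0 : ℝ) ≤ 1 / 2), min_mul_max]
    _ ≤ ((∫⁻ y, min (p y) (q y) ∂π) ^ (1 / 2 : ℝ) * (∫⁻ y, max (p y) (q y) ∂π) ^ (1 / 2 : ℝ))
          ^ 2 := by gcongr
    _ = (∫⁻ y, min (p y) (q y) ∂π) * ∫⁻ y, max (p y) (q y) ∂π := by
        rw [← ENNReal.mul_rpow_of_nonneg _ _ (by norm_num), hsq]
    _ ≤ 2 * ∫⁻ y, min (p y) (q y) ∂π := by rw [mul_comm]; gcongr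

theorem ofReal_abs_sub_mul_lintegral_min_le {S : Y → ℝ} (hS : Measurable S) (a b : ℝ) :
    ENNReal.ofReal |b - a| * ∫⁻ y, min (p y) (q y) ∂π
      ≤ (∫⁻ y, ENNReal.ofReal |S y - a| ∂π.withDensity p)
        + ∫⁻ y, ENNReal.ofReal |S y - b| ∂π.withDensity q := by
  have htri : ∀ y, ENNReal.ofReal |b - a| ≤ ENNReal.ofReal |S y - a| + ENNReal.ofReal |S y - b| :=
    fun y ↦ by
      rw [← ENNReal.ofReal_add (abs_nonneg _) (abs_nonneg _)]
      rw [add_comm, abs_sub_comm (S y) b]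
      exact ENNReal.ofReal_le_ofReal (abs_sub_le _ _ _)
  calc ENNReal.ofReal |b - a| * ∫⁻ y, min (p y) (q y) ∂π
      = ∫⁻ _, ENNReal.ofReal |b - a| ∂π.withDensity fun y ↦ min (p y) (q y) := by
        rw [lintegral_const, withDensity_apply _ MeasurableSet.univ, setLIntegral_univ]
    _ ≤ ∫⁻ y, ENNReal.ofReal |S y - a| + ENNReal.ofReal |S y - b|
          ∂π.withDensity fun y ↦ min (p y) (q y) := lintegral_mono htri
    _ = (∫⁻ y, ENNReal.ofReal |S y - a| ∂π.withDensity fun y ↦ min (p y) (q y))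
          + ∫⁻ y, ENNReal.ofReal |S y - b| ∂π.withDensity fun y ↦ min (p y) (q y) :=
        lintegral_add_left (hS.sub_const a).abs.ennreal_ofReal _
    _ ≤ _ := add_le_add
        (lintegral_mono' (withDensity_mono (ae_of_all _ fun _ ↦ min_le_left _ _)) le_rfl)
        (lintegral_mono' (withDensity_mono (ae_of_all _ fun _ ↦ min_le_right _ _)) le_rfl)

theorem ofReal_abs_sub_mul_sq_hellingerAffinity_le (hp : Measurable p) (hq : Measurable q)
    (hp1 : ∫⁻ y, p y ∂π ≤ 1) (hq1 : ∫⁻ y, q y ∂π ≤ 1) {S : Y → ℝ} (hS : Measurable S) (a b : ℝ) :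
    ENNReal.ofReal |b - a| * hellingerAffinity π p q ^ 2
      ≤ 4 * max (∫⁻ y, ENNReal.ofReal |S y - a| ∂π.withDensity p)
          (∫⁻ y, ENNReal.ofReal |S y - b| ∂π.withDensity q) :=
  calc ENNReal.ofReal |b - a| * hellingerAffinity π p q ^ 2
      ≤ ENNReal.ofReal |b - a| * (2 * ∫⁻ y, min (p y) (q y) ∂π) := by
        gcongr; exact sq_hellingerAffinity_le_two_mul_lintegral_min hp hq hp1 hq1
    _ = 2 * (ENNReal.ofReal |b - a| * ∫⁻ y, min (p y) (q y) ∂π) := by ring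
    _ ≤ 2 * ((∫⁻ y, ENNReal.ofReal |S y - a| ∂π.withDensity p)
          + ∫⁻ y, ENNReal.ofReal |S y - b| ∂π.withDensity q) := by
        gcongr; exact ofReal_abs_sub_mul_lintegral_min_le hS a b
    _ ≤ 2 * (max (∫⁻ y, ENNReal.ofReal |S y - a| ∂π.withDensity p)
            (∫⁻ y, ENNReal.ofReal |S y - b| ∂π.withDensity q)
          + max (∫⁻ y, ENNReal.ofReal |S y - a| ∂π.withDensity p)
            (∫⁻ y, ENNReal.ofReal |S y - b| ∂π.withDensity q)) := by
        gcongr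
        exacts [le_max_left _ _, le_max_right _ _]
    _ = _ := by ring

end TwoPoint

section Density

variable {X : Type*} [MeasurableSpace X] {μ : Measure X} {p q : X → ℝ}

def IsProbabilityDensity (μ : Measure X) (p : X → ℝ) : Prop :=
  Measurable p ∧ (∀ x, 0 ≤ p x) ∧ ∫ x, p x ∂μ = 1

theorem IsProbabilityDensity.integrable (hp : IsProbabilityDensity μ p) : Integrable p μ :=
  integrable_of_integral_eq_one hp.2.2

theorem IsProbabilityDensity.lintegral_ofReal (hp : IsProbabilityDensity μ p) :
    ∫⁻ x, ENNReal.ofReal (p x) ∂μ = 1 := by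
  rw [← ofReal_integral_eq_lintegral_ofReal hp.integrable (ae_of_all _ hp.2.1), hp.2.2,
    ENNReal.ofReal_one]

theorem IsProbabilityDensity.integrable_sqrt_mul_sqrt (hp : IsProbabilityDensity μ p)
    (hq : IsProbabilityDensity μ q) : Integrable (fun x ↦ √(p x) * √(q x)) μ := by
  refine ((hp.integrable.add hq.integrable).div_const 2).mono'
    (hp.1.sqrt.mul hq.1.sqrt).aestronglyMeasurable (ae_of_all _ fun x ↦ ?_)
  -- AM-GM: `√p √q ≤ (p + q) / 2`
  rw [Real.norm_eq_abs, abs_of_nonneg (by positivity), Pi.add_apply]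
  nlinarith [Real.sq_sqrt (hp.2.1 x), Real.sq_sqrt (hq.2.1 x), sq_nonneg (√(p x) - √(q x))]

theorem hellingerSq_nonneg (μ : Measure X) (p q : X → ℝ) : 0 ≤ hellingerSq μ p q :=
  mul_nonneg (by norm_num) (integral_nonneg fun _ ↦ sq_nonneg _)

theorem hellingerSq_self (μ : Measure X) (p : X → ℝ) : hellingerSq μ p p = 0 := by
  simp [hellingerSq]

theorem hellingerSq_comm (μ : Measure X) (p q : X → ℝ) : hellingerSq μ p q = hellingerSq μ q p := by
  simp only [hellingerSq]
  congr 2 with x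
  ring

theorem hellingerSq_eq_one_sub_integral (hp : IsProbabilityDensity μ p)
    (hq : IsProbabilityDensity μ q) :
    hellingerSq μ p q = 1 - ∫ x, √(p x) * √(q x) ∂μ := by
  have hexpand : ∀ x, (√(p x) - √(q x)) ^ 2 = p x + q x - 2 * (√(p x) * √(q x)) := fun x ↦ by
    rw [sub_sq, Real.sq_sqrt (hp.2.1 x), Real.sq_sqrt (hq.2.1 x)]; ring
  simp only [hellingerSq, hexpand]
  rw [integral_sub (f := fun x ↦ p x + q x) (hp.integrable.add hq.integrable)
      ((hp.integrable_sqrt_mul_sqrt hq).const_mul 2), integral_add hp.integrable hq.integrable,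
    integral_const_mul, hp.2.2, hq.2.2]
  ring

theorem hellingerSq_le_one (hp : IsProbabilityDensity μ p) (hq : IsProbabilityDensity μ q) :
    hellingerSq μ p q ≤ 1 := by
  rw [hellingerSq_eq_one_sub_integral hp hq, sub_le_self_iff]
  exact integral_nonneg fun _ ↦ by positivity

theorem hellingerAffinity_ofReal (hp : IsProbabilityDensity μ p) (hq : IsProbabilityDensity μ q) :
    hellingerAffinity μ (fun x ↦ ENNReal.ofReal (p x)) (fun x ↦ ENNReal.ofReal (q x))
      = ENNReal.ofReal (1 - hellingerSq μ p q) := by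
  have hsqrt : ∀ x, (ENNReal.ofReal (p x) * ENNReal.ofReal (q x)) ^ (1 / 2 : ℝ)
      = ENNReal.ofReal (√(p x) * √(q x)) := fun x ↦ by
    rw [← ENNReal.ofReal_mul (hp.2.1 x), ENNReal.ofReal_rpow_of_nonneg
      (mul_nonneg (hp.2.1 x) (hq.2.1 x)) (by norm_num), ← Real.sqrt_eq_rpow,
      Real.sqrt_mul (hp.2.1 x)]
  rw [hellingerSq_eq_one_sub_integral hp hq, sub_sub_cancel, hellingerAffinity,
    ofReal_integral_eq_lintegral_ofReal (hp.integrable_sqrt_mul_sqrt hq)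
      (ae_of_all _ fun _ ↦ by positivity)]
  simp_rw [hsqrt]

end Density

section Risk

variable {X : Type*} [MeasurableSpace X] {μ : Measure X} {f g : X → ℝ}

noncomputable def absRisk (μ : Measure X) (p : X → ℝ) {n : ℕ} (S : (Fin n → X) → ℝ) (t : ℝ) :
    ℝ≥0∞ :=
  ∫⁻ w, ENNReal.ofReal |S w - t|
    ∂Measure.pi fun _ : Fin n ↦ μ.withDensity fun x ↦ ENNReal.ofReal (p x)

theorem ofReal_le_max_absRisk [SigmaFinite μ] (hf : IsProbabilityDensity μ f)
    (hg : IsProbabilityDensity μ g) {n : ℕ} {S : (Fin n → X) → ℝ} (hS : Measurable S) (a b : ℝ) :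
    ENNReal.ofReal (1 / 4 * |b - a| * (1 - hellingerSq μ g f) ^ (2 * n))
      ≤ max (absRisk μ f S a) (absRisk μ g S b) := by
  have hfm : Measurable f := hf.1
  have hgm : Measurable g := hg.1
  have hprod : ∀ {p : X → ℝ}, IsProbabilityDensity μ p →
      ∫⁻ w, ∏ i, ENNReal.ofReal (p (w i)) ∂Measure.pi (fun _ : Fin n ↦ μ) = 1 := fun hp ↦ by
    simp [lintegral_fin_prod_eq_prod _ fun _ ↦ hp.1.ennreal_ofReal, hp.lintegral_ofReal]
  have key := ofReal_abs_sub_mul_sq_hellingerAffinity_le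
    (p := fun w ↦ ∏ i, ENNReal.ofReal (f (w i))) (q := fun w ↦ ∏ i, ENNReal.ofReal (g (w i)))
    (by fun_prop) (by fun_prop) (hprod hf).le (hprod hg).le hS a b
  rw [hellingerAffinity_pi μ hfm.ennreal_ofReal hgm.ennreal_ofReal, hellingerAffinity_ofReal hf hg,
    ← Measure.pi_withDensity _ fun _ ↦ hfm.ennreal_ofReal,
    ← Measure.pi_withDensity _ fun _ ↦ hgm.ennreal_ofReal,
    ← pow_mul, ← ENNReal.ofReal_pow (sub_nonneg.2 (hellingerSq_le_one hf hg)),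
    ← ENNReal.ofReal_mul (abs_nonneg _), hellingerSq_comm] at key
  have h4 : 4 * ENNReal.ofReal (1 / 4 * |b - a| * (1 - hellingerSq μ g f) ^ (2 * n))
      = ENNReal.ofReal (|b - a| * (1 - hellingerSq μ g f) ^ (n * 2)) := by
    rw [show (4 : ℝ≥0∞) = ENNReal.ofReal 4 by norm_num, ← ENNReal.ofReal_mul (by norm_num)]
    ring_nf
  exact (ENNReal.mul_le_mul_iff_right (by norm_num) (by norm_num)).1 (h4.trans_le key)

end Risk

theorem tendsto_one_sub_pow_two_mul_exp {h : ℕ → ℝ} {t : ℝ}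
    (ht : Tendsto (fun n : ℕ ↦ n * h n) atTop (𝓝 t)) :
    Tendsto (fun n ↦ (1 - h n) ^ (2 * n)) atTop (𝓝 (Real.exp (-2 * t))) := by
  have hlim := (Real.tendsto_one_add_pow_exp_of_tendsto (g := fun n ↦ -h n) (t := -t)
    (by simpa using ht.neg)).pow 2
  rw [show Real.exp (-2 * t) = Real.exp (-t) ^ 2 by rw [← Real.exp_nat_mul]; push_cast; ring_nf]
  exact hlim.congr fun n ↦ by ring

theorem stmt16_general {X : Type*} [MeasurableSpace X] (μ : Measure X) [SigmaFinite μ]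
    (𝓕 : Set (X → ℝ))
    (hdens : ∀ p ∈ 𝓕, Measurable p ∧ (∀ x, 0 ≤ p x) ∧ ∫ x, p x ∂μ = 1)
    (T : (X → ℝ) → ℝ) (f : X → ℝ) (hf : f ∈ 𝓕)
    (fn : ℕ → X → ℝ)
    (α β : ℝ)
    (hH : Tendsto (fun n : ℕ => Real.sqrt n * Real.sqrt (hellingerSq μ (fn n) f))
      atTop (𝓝 α))
    (hT : Tendsto (fun n : ℕ => |T (fn n) - T f|) atTop (𝓝 β))
    (𝓕f : Set (X → ℝ))
    (hball : ∃ r : ℝ, 0 < r ∧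
      𝓕f = {g ∈ 𝓕 | Real.sqrt (hellingerSq μ g f) < r})
    (hev : ∀ᶠ n in atTop, fn n ∈ 𝓕f) :
    ENNReal.ofReal ((1 / 4) * β * Real.exp (-2 * α ^ 2)) ≤
      Filter.atTop.liminf (fun n : ℕ =>
        ⨅ (Tn : (Fin n → X) → ℝ) (_ : Measurable Tn),
          ⨆ g ∈ 𝓕f,
            ∫⁻ w, ENNReal.ofReal |Tn w - T g|
              ∂(Measure.pi fun _ : Fin n =>
                  μ.withDensity fun x => ENNReal.ofReal (g x))) := by
  obtain ⟨r, hr, rfl⟩ := hball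
  have hf_mem : f ∈ {g ∈ 𝓕 | √(hellingerSq μ g f) < r} := ⟨hf, by simpa [hellingerSq_self]⟩
  have hnH : Tendsto (fun n : ℕ ↦ n * hellingerSq μ (fn n) f) atTop (𝓝 (α ^ 2)) :=
    (hH.pow 2).congr fun n ↦ by
      rw [mul_pow, Real.sq_sqrt n.cast_nonneg, Real.sq_sqrt (hellingerSq_nonneg _ _ _)]
  have hbound := (hT.const_mul (1 / 4)).mul (tendsto_one_sub_pow_two_mul_exp hnH)
  rw [← (ENNReal.tendsto_ofReal hbound).liminf_eq]
  refine liminf_le_liminf (hev.mono fun n hn ↦ le_iInf₂ fun S hS ↦ ?_)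
  exact (ofReal_le_max_absRisk (hdens f hf) (hdens _ hn.1) hS _ _).trans
    (max_le (le_biSup (fun g ↦ absRisk μ g S (T g)) hf_mem)
      (le_biSup (fun g ↦ absRisk μ g S (T g)) hn))

/-- (Local asymptotic minimax lower bound, Jongbloed's lemma for
absolute-value loss.)  If `√n·h(fₙ,f) → α` and `|T(fₙ) - T(f)| → β` with
`0 < α, β < ∞`, then for any open Hellinger ball `𝓕f` centered at `f` that eventually
contains the `fₙ`, the minimax risk satisfies
`liminfₙ inf_{Tₙ} sup_{g ∈ 𝓕f} E_{gⁿ}|Tₙ - T(g)| ≥ (1/4)·β·e^{-2α²}`. -/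
theorem stmt16 {X : Type*} [MeasurableSpace X] (μ : Measure X) [SigmaFinite μ]
    (𝓕 : Set (X → ℝ))
    (hdens : ∀ p ∈ 𝓕, Measurable p ∧ (∀ x, 0 ≤ p x) ∧ ∫ x, p x ∂μ = 1)
    (T : (X → ℝ) → ℝ) (f : X → ℝ) (hf : f ∈ 𝓕)
    (fn : ℕ → X → ℝ) (hfn : ∀ n, fn n ∈ 𝓕)
    (α β : ℝ) (hα : 0 < α) (hβ : 0 < β)
    (hH : Tendsto (fun n : ℕ => Real.sqrt n * Real.sqrt (hellingerSq μ (fn n) f))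
      atTop (𝓝 α))
    (hT : Tendsto (fun n : ℕ => |T (fn n) - T f|) atTop (𝓝 β))
    (𝓕f : Set (X → ℝ))
    (hball : ∃ r : ℝ, 0 < r ∧
      𝓕f = {g ∈ 𝓕 | Real.sqrt (hellingerSq μ g f) < r})
    (hev : ∀ᶠ n in atTop, fn n ∈ 𝓕f) :
    ENNReal.ofReal ((1 / 4) * β * Real.exp (-2 * α ^ 2)) ≤
      Filter.atTop.liminf (fun n : ℕ =>
        ⨅ (Tn : (Fin n → X) → ℝ) (_ : Measurable Tn),
          ⨆ g ∈ 𝓕f,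
            ∫⁻ w, ENNReal.ofReal |Tn w - T g|
              ∂(Measure.pi fun _ : Fin n =>
                  μ.withDensity fun x => ENNReal.ofReal (g x))) :=
  stmt16_general μ 𝓕 hdens T f hf fn α β hH hT 𝓕f hball hev
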